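/- arXiv:1904.11717 — 2 statements merged into one kernel-verified Lean document; each statement's English description precedes it below -/
import Mathlib

section
/- Unbiasedness of any convex combination of the SU, DU and SD risks: for all real numbers γ₁, γ₂, γ₃ with γ₁ + γ₂ + γ₃ = 1 and every measurable f : ℝ^d → ℝ satisfying the integrability assumption, γ₁·R_SU(f) + γ₂·R_DU(f) + γ₃·R_SD(f) = R(f). In particular (1−γ)·R_SD(f) + γ·R_SU(f), (1−γ)·R_SD(f) + γ·R_DU(f) and (1−γ)·R_SU(f) + γ·R_DU(f) all equal R(f) for every γ. -/
/-!
The unlabeled, similar-pair and dissimilar-pair distributions are mixtures of products of the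
class conditionals `μ₊`, `μ₋`, so each of `R_SU`, `R_DU`, `R_SD` is a linear combination of the
four class-wise expected losses `∫ ℓ(f, ±1) dμ±`. The corrected losses are chosen so that each of
these combinations collapses to `π₊ ∫ ℓ(f, +1) dμ₊ + π₋ ∫ ℓ(f, -1) dμ₋ = R(f)`; e.g. for `R_SU`,
pointwise `π₊ L̃ + L(·, -1) = ℓ(·, +1)` and `π₋ L̃ + L(·, -1) = ℓ(·, -1)`. So every affine
combination of the three risks is `R(f)` as well.
-/

open MeasureTheory
open scoped ENNReal

section Mixture

variable {α : Type*} [MeasurableSpace α]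

theorem integral_ofReal_smul_add_ofReal_smul {μ ν : Measure α} {a b : ℝ} (ha : 0 ≤ a)
    (hb : 0 ≤ b) {g : α → ℝ} (hμ : Integrable g μ) (hν : Integrable g ν) :
    ∫ x, g x ∂(ENNReal.ofReal a • μ + ENNReal.ofReal b • ν)
      = a * ∫ x, g x ∂μ + b * ∫ x, g x ∂ν := by
  rw [integral_add_measure (hμ.smul_measure ENNReal.ofReal_ne_top)
      (hν.smul_measure ENNReal.ofReal_ne_top), integral_smul_measure, integral_smul_measure,
    ENNReal.toReal_ofReal ha, ENNReal.toReal_ofReal hb, smul_eq_mul, smul_eq_mul]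

variable {μ ν : Measure α} {g : α → ℝ}

theorem integrable_prod_avg [IsFiniteMeasure μ] [IsFiniteMeasure ν] (hμ : Integrable g μ)
    (hν : Integrable g ν) :
    Integrable (fun p : α × α => (g p.1 + g p.2) / 2) (μ.prod ν) := by
  have h₁ : Integrable (fun p : α × α => g p.1) (μ.prod ν) := hμ.comp_fst ν
  have h₂ : Integrable (fun p : α × α => g p.2) (μ.prod ν) := hν.comp_snd μ
  exact (h₁.add h₂).div_const 2

theorem integral_prod_avg [IsProbabilityMeasure μ] [IsProbabilityMeasure ν]
    (hμ : Integrable g μ) (hν : Integrable g ν) :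
    ∫ p, (g p.1 + g p.2) / 2 ∂(μ.prod ν) = (∫ x, g x ∂μ + ∫ x, g x ∂ν) / 2 := by
  rw [integral_div, integral_add (hμ.comp_fst ν) (hν.comp_snd μ), integral_fun_fst,
    integral_fun_snd]
  simp

theorem integral_prod_avg_mixture {μ₁ μ₂ ν₁ ν₂ : Measure α} [IsProbabilityMeasure μ₁]
    [IsProbabilityMeasure μ₂] [IsProbabilityMeasure ν₁] [IsProbabilityMeasure ν₂] {a b : ℝ}
    (ha : 0 ≤ a) (hb : 0 ≤ b) (hμ₁ : Integrable g μ₁) (hμ₂ : Integrable g μ₂)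
    (hν₁ : Integrable g ν₁) (hν₂ : Integrable g ν₂) :
    ∫ p, (g p.1 + g p.2) / 2
        ∂(ENNReal.ofReal a • μ₁.prod μ₂ + ENNReal.ofReal b • ν₁.prod ν₂)
      = a * ((∫ x, g x ∂μ₁ + ∫ x, g x ∂μ₂) / 2)
        + b * ((∫ x, g x ∂ν₁ + ∫ x, g x ∂ν₂) / 2) := by
  rw [integral_ofReal_smul_add_ofReal_smul ha hb (integrable_prod_avg hμ₁ hμ₂)
    (integrable_prod_avg hν₁ hν₂), integral_prod_avg hμ₁ hμ₂, integral_prod_avg hν₁ hν₂]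

end Mixture

section CorrectedLoss

variable (πp πm : ℝ) (ℓ : ℝ → ℝ → ℝ)

noncomputable def correctedLoss (z t : ℝ) : ℝ :=
  (πp * ℓ z t - πm * ℓ z (-t)) / (πp - πm)

noncomputable def correctedPairLoss (z : ℝ) : ℝ :=
  (ℓ z 1 - ℓ z (-1)) / (πp - πm)

variable {πp πm ℓ} {α : Type*} [MeasurableSpace α] {μ : Measure α} {f : α → ℝ}

theorem integrable_correctedLosses
    (hpos : Integrable (fun x => ℓ (f x) 1) μ) (hneg : Integrable (fun x => ℓ (f x) (-1)) μ) :
    Integrable (fun x => correctedPairLoss πp πm ℓ (f x)) μ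
      ∧ Integrable (fun x => correctedLoss πp πm ℓ (f x) 1) μ
      ∧ Integrable (fun x => correctedLoss πp πm ℓ (f x) (-1)) μ := by
  simp only [correctedPairLoss, correctedLoss, neg_neg]
  exact ⟨(hpos.sub hneg).div_const _, ((hpos.const_mul _).sub (hneg.const_mul _)).div_const _,
    ((hneg.const_mul _).sub (hpos.const_mul _)).div_const _⟩

theorem integral_correctedPairLoss
    (hpos : Integrable (fun x => ℓ (f x) 1) μ) (hneg : Integrable (fun x => ℓ (f x) (-1)) μ) :
    ∫ x, correctedPairLoss πp πm ℓ (f x) ∂μ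
      = (∫ x, ℓ (f x) 1 ∂μ - ∫ x, ℓ (f x) (-1) ∂μ) / (πp - πm) := by
  simp only [correctedPairLoss]
  rw [integral_div, integral_sub hpos hneg]

theorem integral_correctedLoss_one
    (hpos : Integrable (fun x => ℓ (f x) 1) μ) (hneg : Integrable (fun x => ℓ (f x) (-1)) μ) :
    ∫ x, correctedLoss πp πm ℓ (f x) 1 ∂μ
      = (πp * ∫ x, ℓ (f x) 1 ∂μ - πm * ∫ x, ℓ (f x) (-1) ∂μ) / (πp - πm) := by
  simp only [correctedLoss]
  rw [integral_div, integral_sub (hpos.const_mul _) (hneg.const_mul _), integral_const_mul,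
    integral_const_mul]

theorem integral_correctedLoss_neg_one
    (hpos : Integrable (fun x => ℓ (f x) 1) μ) (hneg : Integrable (fun x => ℓ (f x) (-1)) μ) :
    ∫ x, correctedLoss πp πm ℓ (f x) (-1) ∂μ
      = (πp * ∫ x, ℓ (f x) (-1) ∂μ - πm * ∫ x, ℓ (f x) 1 ∂μ) / (πp - πm) := by
  simp only [correctedLoss, neg_neg]
  rw [integral_div, integral_sub (hneg.const_mul _) (hpos.const_mul _), integral_const_mul,
    integral_const_mul]

end CorrectedLoss

theorem sq_add_sq_ne_zero_of_ne {R : Type*} [CommRing R] [LinearOrder R] [IsStrictOrderedRing R]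
    {a b : R} (h : a ≠ b) : a ^ 2 + b ^ 2 ≠ 0 := by
  intro hab
  obtain ⟨ha, hb⟩ := (add_eq_zero_iff_of_nonneg (sq_nonneg a) (sq_nonneg b)).mp hab
  rw [pow_eq_zero_iff two_ne_zero] at ha hb
  exact h (ha.trans hb.symm)

section Risks

variable {α : Type*} [MeasurableSpace α] (πp πm : ℝ) (μp μm : Measure α)

noncomputable def unlabeledMeasure : Measure α :=
  ENNReal.ofReal πp • μp + ENNReal.ofReal πm • μm

noncomputable def similarPairMeasure : Measure (α × α) :=
  ENNReal.ofReal (πp ^ 2 / (πp ^ 2 + πm ^ 2)) • μp.prod μp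
    + ENNReal.ofReal (πm ^ 2 / (πp ^ 2 + πm ^ 2)) • μm.prod μm

noncomputable def dissimilarPairMeasure : Measure (α × α) :=
  ((1 : ℝ≥0∞) / 2) • μp.prod μm + ((1 : ℝ≥0∞) / 2) • μm.prod μp

variable (ℓ : ℝ → ℝ → ℝ) (f : α → ℝ)

noncomputable def classRisk : ℝ :=
  πp * ∫ x, ℓ (f x) 1 ∂μp + πm * ∫ x, ℓ (f x) (-1) ∂μm

noncomputable def suRisk : ℝ :=
  (πp ^ 2 + πm ^ 2) * ∫ p, (correctedPairLoss πp πm ℓ (f p.1)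
      + correctedPairLoss πp πm ℓ (f p.2)) / 2 ∂similarPairMeasure πp πm μp μm
    + ∫ x, correctedLoss πp πm ℓ (f x) (-1) ∂unlabeledMeasure πp πm μp μm

noncomputable def duRisk : ℝ :=
  2 * πp * πm * ∫ p, -((correctedPairLoss πp πm ℓ (f p.1)
      + correctedPairLoss πp πm ℓ (f p.2)) / 2) ∂dissimilarPairMeasure μp μm
    + ∫ x, correctedLoss πp πm ℓ (f x) 1 ∂unlabeledMeasure πp πm μp μm

noncomputable def sdRisk : ℝ :=
  (πp ^ 2 + πm ^ 2) * ∫ p, (correctedLoss πp πm ℓ (f p.1) 1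
      + correctedLoss πp πm ℓ (f p.2) 1) / 2 ∂similarPairMeasure πp πm μp μm
    + 2 * πp * πm * ∫ p, (correctedLoss πp πm ℓ (f p.1) (-1)
      + correctedLoss πp πm ℓ (f p.2) (-1)) / 2 ∂dissimilarPairMeasure μp μm

variable {πp πm μp μm ℓ f}

theorem dissimilarPairMeasure_eq_ofReal :
    dissimilarPairMeasure μp μm
      = ENNReal.ofReal (1 / 2) • μp.prod μm + ENNReal.ofReal (1 / 2) • μm.prod μp := by
  rw [dissimilarPairMeasure, ENNReal.ofReal_div_of_pos two_pos, ENNReal.ofReal_one,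
    ENNReal.ofReal_ofNat]

variable [IsProbabilityMeasure μp] [IsProbabilityMeasure μm]

theorem suRisk_eq_classRisk (hp : 0 ≤ πp) (hm : 0 ≤ πm) (hne : πp ≠ πm)
    (hp1 : Integrable (fun x => ℓ (f x) 1) μp) (hpn : Integrable (fun x => ℓ (f x) (-1)) μp)
    (hm1 : Integrable (fun x => ℓ (f x) 1) μm) (hmn : Integrable (fun x => ℓ (f x) (-1)) μm) :
    suRisk πp πm μp μm ℓ f = classRisk πp πm μp μm ℓ f := by
  obtain ⟨Ltp, -, Lnp⟩ := integrable_correctedLosses (πp := πp) (πm := πm) hp1 hpn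
  obtain ⟨Ltm, -, Lnm⟩ := integrable_correctedLosses (πp := πp) (πm := πm) hm1 hmn
  have hne' : πp - πm ≠ 0 := sub_ne_zero.mpr hne
  have hS : πp ^ 2 + πm ^ 2 ≠ 0 := sq_add_sq_ne_zero_of_ne hne
  rw [suRisk, classRisk, similarPairMeasure, unlabeledMeasure,
    integral_prod_avg_mixture (by positivity) (by positivity) Ltp Ltp Ltm Ltm,
    integral_ofReal_smul_add_ofReal_smul hp hm Lnp Lnm,
    integral_correctedPairLoss hp1 hpn, integral_correctedPairLoss hm1 hmn,
    integral_correctedLoss_neg_one hp1 hpn, integral_correctedLoss_neg_one hm1 hmn]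
  field_simp
  ring

theorem duRisk_eq_classRisk (hp : 0 ≤ πp) (hm : 0 ≤ πm) (hne : πp ≠ πm)
    (hp1 : Integrable (fun x => ℓ (f x) 1) μp) (hpn : Integrable (fun x => ℓ (f x) (-1)) μp)
    (hm1 : Integrable (fun x => ℓ (f x) 1) μm) (hmn : Integrable (fun x => ℓ (f x) (-1)) μm) :
    duRisk πp πm μp μm ℓ f = classRisk πp πm μp μm ℓ f := by
  obtain ⟨Ltp, L1p, -⟩ := integrable_correctedLosses (πp := πp) (πm := πm) hp1 hpn
  obtain ⟨Ltm, L1m, -⟩ := integrable_correctedLosses (πp := πp) (πm := πm) hm1 hmn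
  have hne' : πp - πm ≠ 0 := sub_ne_zero.mpr hne
  rw [duRisk, classRisk, dissimilarPairMeasure_eq_ofReal, unlabeledMeasure, integral_neg,
    integral_prod_avg_mixture (by norm_num) (by norm_num) Ltp Ltm Ltm Ltp,
    integral_ofReal_smul_add_ofReal_smul hp hm L1p L1m,
    integral_correctedPairLoss hp1 hpn, integral_correctedPairLoss hm1 hmn,
    integral_correctedLoss_one hp1 hpn, integral_correctedLoss_one hm1 hmn]
  field_simp
  ring

theorem sdRisk_eq_classRisk (hne : πp ≠ πm) (hπ : πp + πm = 1)
    (hp1 : Integrable (fun x => ℓ (f x) 1) μp) (hpn : Integrable (fun x => ℓ (f x) (-1)) μp)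
    (hm1 : Integrable (fun x => ℓ (f x) 1) μm) (hmn : Integrable (fun x => ℓ (f x) (-1)) μm) :
    sdRisk πp πm μp μm ℓ f = classRisk πp πm μp μm ℓ f := by
  obtain ⟨-, L1p, Lnp⟩ := integrable_correctedLosses (πp := πp) (πm := πm) hp1 hpn
  obtain ⟨-, L1m, Lnm⟩ := integrable_correctedLosses (πp := πp) (πm := πm) hm1 hmn
  have hne' : πp - πm ≠ 0 := sub_ne_zero.mpr hne
  have hS : πp ^ 2 + πm ^ 2 ≠ 0 := sq_add_sq_ne_zero_of_ne hne
  obtain rfl : πm = 1 - πp := by linarith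
  rw [sdRisk, classRisk, similarPairMeasure, dissimilarPairMeasure_eq_ofReal,
    integral_prod_avg_mixture (by positivity) (by positivity) L1p L1p L1m L1m,
    integral_prod_avg_mixture (by norm_num) (by norm_num) Lnp Lnm Lnm Lnp,
    integral_correctedLoss_one hp1 hpn, integral_correctedLoss_one hm1 hmn,
    integral_correctedLoss_neg_one hp1 hpn, integral_correctedLoss_neg_one hm1 hmn]
  field_simp
  ring

end Risks

theorem sdu_combination_unbiased_general {d : ℕ}
    (μp μm : Measure (Fin d → ℝ)) [IsProbabilityMeasure μp] [IsProbabilityMeasure μm]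
    (πp πm : ℝ) (hπp : πp ∈ Set.Ioo (0 : ℝ) 1) (hπm : πm = 1 - πp) (hne : πp ≠ πm)
    (πS πD : ℝ) (hπS : πS = πp ^ 2 + πm ^ 2) (hπD : πD = 2 * πp * πm)
    (μU : Measure (Fin d → ℝ))
    (hμU : μU = ENNReal.ofReal πp • μp + ENNReal.ofReal πm • μm)
    (μS : Measure ((Fin d → ℝ) × (Fin d → ℝ)))
    (hμS : μS = ENNReal.ofReal (πp ^ 2 / πS) • (μp.prod μp)
        + ENNReal.ofReal (πm ^ 2 / πS) • (μm.prod μm))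
    (μD : Measure ((Fin d → ℝ) × (Fin d → ℝ)))
    (hμD : μD = ((1 : ℝ≥0∞) / 2) • (μp.prod μm) + ((1 : ℝ≥0∞) / 2) • (μm.prod μp))
    (ℓ : ℝ → ℝ → ℝ)
    (L : ℝ → ℝ → ℝ) (hL : ∀ z t, L z t = (πp * ℓ z t - πm * ℓ z (-t)) / (πp - πm))
    (Lt : ℝ → ℝ) (hLt : ∀ z, Lt z = (ℓ z 1 - ℓ z (-1)) / (πp - πm))
    (R RSU RDU RSD : ((Fin d → ℝ) → ℝ) → ℝ)
    (hR : ∀ f : (Fin d → ℝ) → ℝ,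
      R f = πp * ∫ x, ℓ (f x) 1 ∂μp + πm * ∫ x, ℓ (f x) (-1) ∂μm)
    (hRSU : ∀ f : (Fin d → ℝ) → ℝ,
      RSU f = πS * ∫ p, (Lt (f p.1) + Lt (f p.2)) / 2 ∂μS + ∫ x, L (f x) (-1) ∂μU)
    (hRDU : ∀ f : (Fin d → ℝ) → ℝ,
      RDU f = πD * ∫ p, -((Lt (f p.1) + Lt (f p.2)) / 2) ∂μD + ∫ x, L (f x) 1 ∂μU)
    (hRSD : ∀ f : (Fin d → ℝ) → ℝ,
      RSD f = πS * ∫ p, (L (f p.1) 1 + L (f p.2) 1) / 2 ∂μS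
        + πD * ∫ p, (L (f p.1) (-1) + L (f p.2) (-1)) / 2 ∂μD)
    (f : (Fin d → ℝ) → ℝ)
    (hintp : ∀ t ∈ ({1, -1} : Set ℝ), Integrable (fun x => ℓ (f x) t) μp)
    (hintm : ∀ t ∈ ({1, -1} : Set ℝ), Integrable (fun x => ℓ (f x) t) μm) :
    (∀ γ₁ γ₂ γ₃ : ℝ, γ₁ + γ₂ + γ₃ = 1 →
        γ₁ * RSU f + γ₂ * RDU f + γ₃ * RSD f = R f)
      ∧ (∀ γ : ℝ, (1 - γ) * RSD f + γ * RSU f = R f)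
      ∧ (∀ γ : ℝ, (1 - γ) * RSD f + γ * RDU f = R f)
      ∧ (∀ γ : ℝ, (1 - γ) * RSU f + γ * RDU f = R f) := by
  obtain rfl : L = correctedLoss πp πm ℓ := funext fun z => funext (hL z)
  obtain rfl : Lt = correctedPairLoss πp πm ℓ := funext hLt
  subst hπS hπD hμU hμS hμD
  have hp : 0 ≤ πp := hπp.1.le
  have hm : 0 ≤ πm := by linarith [hπp.2]
  have hp1 := hintp 1 (by simp)
  have hpn := hintp (-1) (by simp)
  have hm1 := hintm 1 (by simp)
  have hmn := hintm (-1) (by simp)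
  have hSU : RSU f = R f := by
    rw [hRSU, hR]; exact suRisk_eq_classRisk hp hm hne hp1 hpn hm1 hmn
  have hDU : RDU f = R f := by
    rw [hRDU, hR]; exact duRisk_eq_classRisk hp hm hne hp1 hpn hm1 hmn
  have hSD : RSD f = R f := by
    rw [hRSD, hR]; exact sdRisk_eq_classRisk hne (by linarith) hp1 hpn hm1 hmn
  rw [hSU, hDU, hSD]
  exact ⟨fun γ₁ γ₂ γ₃ hγ => by linear_combination R f * hγ, fun γ => by ring,
    fun γ => by ring, fun γ => by ring⟩

/-- Unbiasedness of any convex combination of the SU, DU and SD risks. -/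
theorem sdu_combination_unbiased {d : ℕ} (hd : 1 ≤ d)
    (μp μm : Measure (Fin d → ℝ)) [IsProbabilityMeasure μp] [IsProbabilityMeasure μm]
    (πp πm : ℝ) (hπp : πp ∈ Set.Ioo (0 : ℝ) 1) (hπm : πm = 1 - πp) (hne : πp ≠ πm)
    (πS πD : ℝ) (hπS : πS = πp ^ 2 + πm ^ 2) (hπD : πD = 2 * πp * πm)
    (μU : Measure (Fin d → ℝ))
    (hμU : μU = ENNReal.ofReal πp • μp + ENNReal.ofReal πm • μm)
    (μS : Measure ((Fin d → ℝ) × (Fin d → ℝ)))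
    (hμS : μS = ENNReal.ofReal (πp ^ 2 / πS) • (μp.prod μp)
        + ENNReal.ofReal (πm ^ 2 / πS) • (μm.prod μm))
    (μD : Measure ((Fin d → ℝ) × (Fin d → ℝ)))
    (hμD : μD = ((1 : ℝ≥0∞) / 2) • (μp.prod μm) + ((1 : ℝ≥0∞) / 2) • (μm.prod μp))
    (ℓ : ℝ → ℝ → ℝ) (hℓ : ∀ z t, 0 ≤ ℓ z t)
    (L : ℝ → ℝ → ℝ) (hL : ∀ z t, L z t = (πp * ℓ z t - πm * ℓ z (-t)) / (πp - πm))
    (Lt : ℝ → ℝ) (hLt : ∀ z, Lt z = (ℓ z 1 - ℓ z (-1)) / (πp - πm))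
    (R RSU RDU RSD : ((Fin d → ℝ) → ℝ) → ℝ)
    (hR : ∀ f : (Fin d → ℝ) → ℝ,
      R f = πp * ∫ x, ℓ (f x) 1 ∂μp + πm * ∫ x, ℓ (f x) (-1) ∂μm)
    (hRSU : ∀ f : (Fin d → ℝ) → ℝ,
      RSU f = πS * ∫ p, (Lt (f p.1) + Lt (f p.2)) / 2 ∂μS + ∫ x, L (f x) (-1) ∂μU)
    (hRDU : ∀ f : (Fin d → ℝ) → ℝ,
      RDU f = πD * ∫ p, -((Lt (f p.1) + Lt (f p.2)) / 2) ∂μD + ∫ x, L (f x) 1 ∂μU)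
    (hRSD : ∀ f : (Fin d → ℝ) → ℝ,
      RSD f = πS * ∫ p, (L (f p.1) 1 + L (f p.2) 1) / 2 ∂μS
        + πD * ∫ p, (L (f p.1) (-1) + L (f p.2) (-1)) / 2 ∂μD)
    (f : (Fin d → ℝ) → ℝ) (hf : Measurable f)
    (hintp : ∀ t ∈ ({1, -1} : Set ℝ), Integrable (fun x => ℓ (f x) t) μp)
    (hintm : ∀ t ∈ ({1, -1} : Set ℝ), Integrable (fun x => ℓ (f x) t) μm) :
    (∀ γ₁ γ₂ γ₃ : ℝ, γ₁ + γ₂ + γ₃ = 1 →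
        γ₁ * RSU f + γ₂ * RDU f + γ₃ * RSD f = R f)
      ∧ (∀ γ : ℝ, (1 - γ) * RSD f + γ * RSU f = R f)
      ∧ (∀ γ : ℝ, (1 - γ) * RSD f + γ * RDU f = R f)
      ∧ (∀ γ : ℝ, (1 - γ) * RSU f + γ * RDU f = R f) :=
  sdu_combination_unbiased_general μp μm πp πm hπp hπm hne πS πD hπS hπD μU hμU μS hμS μD hμD ℓ L hL
    Lt hLt R RSU RDU RSD hR hRSU hRDU hRSD f hintp hintm
end

section
/- Convexity of the SDU objective (Theorem 2): let γ₁, γ₂, γ₃ ≥ 0 and λ ≥ 0, and define Ĵ^γ(w) = γ₁·R̂_SU(f_w) + γ₂·R̂_DU(f_w) + γ₃·R̂_SD(f_w) + (λ/2)·‖w‖². If z ↦ ℓ(z,t) is convex on ℝ for each t ∈ {+1,−1} and ℓ(z,+1) − ℓ(z,−1) = −z for all z ∈ ℝ, then Ĵ^γ : ℝ^k → ℝ is a convex function of w. -/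
/-!
With the symmetry condition `ℓ(z,+1) - ℓ(z,-1) = -z`, the correction `L̃` is the linear map
`z ↦ -z / (π₊ - π₋)`, and each corrected loss `z ↦ L(z, ±1)` is `z ↦ ℓ(z,-1)` plus a linear term,
hence convex. Every term of `Ĵ` is then a convex function of a real number composed with the linear
map `w ↦ ⟪w, φ x⟫`, weighted by a nonnegative constant, except the `L̃`-terms of `R̂_DU`, whose
weight is negative but which are linear in `w`.
-/

open Set
open scoped RealInnerProductSpace

section ConvexOnUniv

variable {E : Type*}

lemma convexOn_univ_const_mul (c : ℝ) : ConvexOn ℝ univ fun z : ℝ => c * z :=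
  (LinearMap.mul ℝ ℝ c).convexOn convex_univ

lemma ConvexOn.add_const_mul {g : ℝ → ℝ} (hg : ConvexOn ℝ univ g) (c : ℝ) :
    ConvexOn ℝ univ fun z => g z + c * z :=
  hg.add (convexOn_univ_const_mul c)

lemma convexOn_univ_sum [AddCommMonoid E] [Module ℝ E] {ι : Type*} (s : Finset ι)
    {f : ι → E → ℝ} (hf : ∀ i ∈ s, ConvexOn ℝ univ (f i)) :
    ConvexOn ℝ univ fun x => ∑ i ∈ s, f i x := by
  simpa only [← Finset.sum_apply] using
    Finset.sum_induction f (ConvexOn ℝ univ) (fun _ _ => ConvexOn.add)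
      (convexOn_const 0 convex_univ) hf

variable [NormedAddCommGroup E] [InnerProductSpace ℝ E]

lemma ConvexOn.comp_inner_left {g : ℝ → ℝ} (hg : ConvexOn ℝ univ g) (v : E) :
    ConvexOn ℝ univ fun w => g ⟪w, v⟫ := by
  simpa only [Function.comp_def, innerₛₗ_apply_apply, real_inner_comm v, preimage_univ] using
    hg.comp_linearMap (innerₛₗ ℝ v)

lemma convexOn_univ_mul_sum_comp_inner {ι : Type*} (s : Finset ι) {g : ℝ → ℝ} {c : ℝ}
    (hcg : ConvexOn ℝ univ fun z => c * g z) (v : ι → E) :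
    ConvexOn ℝ univ fun w => c * ∑ i ∈ s, g ⟪w, v i⟫ := by
  simpa only [Finset.mul_sum] using convexOn_univ_sum s fun i _ => hcg.comp_inner_left (v i)

lemma convexOn_univ_mul_sum_pair_comp_inner {ι : Type*} (s : Finset ι) {g : ℝ → ℝ} {c : ℝ}
    (hcg : ConvexOn ℝ univ fun z => c * g z) (a b : ι → E) :
    ConvexOn ℝ univ fun w => c * ∑ i ∈ s, (g ⟪w, a i⟫ + g ⟪w, b i⟫) := by
  simpa only [Finset.sum_add_distrib, mul_add, Pi.add_def] using
    (convexOn_univ_mul_sum_comp_inner s hcg a).add (convexOn_univ_mul_sum_comp_inner s hcg b)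

lemma convexOn_univ_sq_norm : ConvexOn ℝ univ fun w : E => ‖w‖ ^ 2 :=
  (convexOn_norm convex_univ).pow (fun _ _ => norm_nonneg _) 2

end ConvexOnUniv

section CorrectedLoss

variable {πp πm : ℝ} {ℓ : ℝ → ℝ → ℝ}

lemma correctedLoss_eq (hne : πp ≠ πm) (hodd : ∀ z : ℝ, ℓ z 1 - ℓ z (-1) = -z) {t : ℝ}
    (ht : t = 1 ∨ t = -1) :
    ∃ c : ℝ, ∀ z, (πp * ℓ z t - πm * ℓ z (-t)) / (πp - πm) = ℓ z (-1) + c * z := by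
  have hd : πp - πm ≠ 0 := sub_ne_zero.2 hne
  have hℓ : ∀ z, ℓ z 1 = ℓ z (-1) - z := fun z => by linarith [hodd z]
  rcases ht with rfl | rfl
  · exact ⟨-(πp / (πp - πm)), fun z => by rw [hℓ]; field_simp; ring⟩
  · exact ⟨πm / (πp - πm), fun z => by rw [neg_neg, hℓ]; field_simp; ring⟩

lemma convexOn_correctedLoss (hne : πp ≠ πm) (hconv : ConvexOn ℝ univ fun z => ℓ z (-1))
    (hodd : ∀ z : ℝ, ℓ z 1 - ℓ z (-1) = -z) {t : ℝ} (ht : t = 1 ∨ t = -1) :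
    ConvexOn ℝ univ fun z => (πp * ℓ z t - πm * ℓ z (-t)) / (πp - πm) := by
  obtain ⟨c, hc⟩ := correctedLoss_eq hne hodd ht
  simpa only [hc] using hconv.add_const_mul c

lemma correctedDiff_eq (hodd : ∀ z : ℝ, ℓ z 1 - ℓ z (-1) = -z) (z : ℝ) :
    (ℓ z 1 - ℓ z (-1)) / (πp - πm) = -(πp - πm)⁻¹ * z := by
  rw [hodd]
  ring

end CorrectedLoss

theorem sdu_objective_convex_general {d k : ℕ}
    (πp πm : ℝ) (hπp : πp ∈ Set.Ioo (0 : ℝ) 1) (hπm : πm = 1 - πp) (hne : πp ≠ πm)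
    (πS πD : ℝ) (hπS : πS = πp ^ 2 + πm ^ 2) (hπD : πD = 2 * πp * πm)
    (ℓ : ℝ → ℝ → ℝ)
    (L : ℝ → ℝ → ℝ) (hL : ∀ z t, L z t = (πp * ℓ z t - πm * ℓ z (-t)) / (πp - πm))
    (Lt : ℝ → ℝ) (hLt : ∀ z, Lt z = (ℓ z 1 - ℓ z (-1)) / (πp - πm))
    (nS nD nU : ℕ)
    (xS xS' : Fin nS → (Fin d → ℝ)) (xD xD' : Fin nD → (Fin d → ℝ))
    (xU : Fin nU → (Fin d → ℝ))
    (φ : (Fin d → ℝ) → EuclideanSpace ℝ (Fin k))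
    (fw : EuclideanSpace ℝ (Fin k) → (Fin d → ℝ) → ℝ)
    (hfw : ∀ w x, fw w x = ⟪w, φ x⟫)
    (RhatSU RhatDU RhatSD : ((Fin d → ℝ) → ℝ) → ℝ)
    (hRhatSU : ∀ f : (Fin d → ℝ) → ℝ,
      RhatSU f = πS / (2 * nS) * ∑ i, (Lt (f (xS i)) + Lt (f (xS' i)))
        + (1 / nU) * ∑ i, L (f (xU i)) (-1))
    (hRhatDU : ∀ f : (Fin d → ℝ) → ℝ,
      RhatDU f = -(πD / (2 * nD)) * ∑ i, (Lt (f (xD i)) + Lt (f (xD' i)))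
        + (1 / nU) * ∑ i, L (f (xU i)) 1)
    (hRhatSD : ∀ f : (Fin d → ℝ) → ℝ,
      RhatSD f = πS / (2 * nS) * ∑ i, (L (f (xS i)) 1 + L (f (xS' i)) 1)
        + πD / (2 * nD) * ∑ i, (L (f (xD i)) (-1) + L (f (xD' i)) (-1)))
    (γ₁ γ₂ γ₃ lam : ℝ) (hγ₁ : 0 ≤ γ₁) (hγ₂ : 0 ≤ γ₂) (hγ₃ : 0 ≤ γ₃) (hlam : 0 ≤ lam)
    (J : EuclideanSpace ℝ (Fin k) → ℝ)
    (hJ : ∀ w, J w = γ₁ * RhatSU (fw w) + γ₂ * RhatDU (fw w) + γ₃ * RhatSD (fw w)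
        + lam / 2 * ‖w‖ ^ 2)
    (hconv : ∀ t ∈ ({1, -1} : Set ℝ), ConvexOn ℝ Set.univ (fun z => ℓ z t))
    (hodd : ∀ z : ℝ, ℓ z 1 - ℓ z (-1) = -z) :
    ConvexOn ℝ Set.univ J := by
  have hℓ : ConvexOn ℝ univ fun z => ℓ z (-1) := hconv (-1) (by simp)
  have hLpos : ConvexOn ℝ univ fun z => L z 1 := by
    simpa only [hL] using convexOn_correctedLoss hne hℓ hodd (Or.inl rfl)
  have hLneg : ConvexOn ℝ univ fun z => L z (-1) := by
    simpa only [hL] using convexOn_correctedLoss hne hℓ hodd (Or.inr rfl)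
  have hLt_lin : ∀ c, ConvexOn ℝ univ fun z => c * Lt z := fun c => by
    simpa only [hLt, correctedDiff_eq hodd, ← mul_assoc] using convexOn_univ_const_mul _
  have hπS0 : 0 ≤ πS := hπS ▸ by positivity
  have hπD0 : 0 ≤ πD := hπD ▸ hπm ▸ mul_nonneg (by linarith [hπp.1]) (by linarith [hπp.2])
  have hcS : 0 ≤ πS / (2 * nS) := by positivity
  have hcD : 0 ≤ πD / (2 * nD) := by positivity
  have hcU : 0 ≤ 1 / (nU : ℝ) := by positivity
  obtain rfl : J = _ := funext hJ
  simp only [hRhatSU, hRhatDU, hRhatSD, hfw]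
  refine (((ConvexOn.smul hγ₁ ?_).add (ConvexOn.smul hγ₂ ?_)).add (ConvexOn.smul hγ₃ ?_)).add
    (convexOn_univ_sq_norm.smul (by positivity))
  · exact (convexOn_univ_mul_sum_pair_comp_inner _ (hLt_lin _) _ _).add
      (convexOn_univ_mul_sum_comp_inner _ (hLneg.smul hcU) _)
  · exact (convexOn_univ_mul_sum_pair_comp_inner _ (hLt_lin _) _ _).add
      (convexOn_univ_mul_sum_comp_inner _ (hLpos.smul hcU) _)
  · exact (convexOn_univ_mul_sum_pair_comp_inner _ (hLpos.smul hcS) _ _).add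
      (convexOn_univ_mul_sum_pair_comp_inner _ (hLneg.smul hcD) _ _)

/-- Convexity of the SDU objective (Theorem 2). -/
theorem sdu_objective_convex {d k : ℕ}
    (πp πm : ℝ) (hπp : πp ∈ Set.Ioo (0 : ℝ) 1) (hπm : πm = 1 - πp) (hne : πp ≠ πm)
    (πS πD : ℝ) (hπS : πS = πp ^ 2 + πm ^ 2) (hπD : πD = 2 * πp * πm)
    (ℓ : ℝ → ℝ → ℝ)
    (L : ℝ → ℝ → ℝ) (hL : ∀ z t, L z t = (πp * ℓ z t - πm * ℓ z (-t)) / (πp - πm))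
    (Lt : ℝ → ℝ) (hLt : ∀ z, Lt z = (ℓ z 1 - ℓ z (-1)) / (πp - πm))
    (nS nD nU : ℕ) (hnS : 1 ≤ nS) (hnD : 1 ≤ nD) (hnU : 1 ≤ nU)
    (xS xS' : Fin nS → (Fin d → ℝ)) (xD xD' : Fin nD → (Fin d → ℝ))
    (xU : Fin nU → (Fin d → ℝ))
    (φ : (Fin d → ℝ) → EuclideanSpace ℝ (Fin k))
    (fw : EuclideanSpace ℝ (Fin k) → (Fin d → ℝ) → ℝ)
    (hfw : ∀ w x, fw w x = ⟪w, φ x⟫)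
    (RhatSU RhatDU RhatSD : ((Fin d → ℝ) → ℝ) → ℝ)
    (hRhatSU : ∀ f : (Fin d → ℝ) → ℝ,
      RhatSU f = πS / (2 * nS) * ∑ i, (Lt (f (xS i)) + Lt (f (xS' i)))
        + (1 / nU) * ∑ i, L (f (xU i)) (-1))
    (hRhatDU : ∀ f : (Fin d → ℝ) → ℝ,
      RhatDU f = -(πD / (2 * nD)) * ∑ i, (Lt (f (xD i)) + Lt (f (xD' i)))
        + (1 / nU) * ∑ i, L (f (xU i)) 1)
    (hRhatSD : ∀ f : (Fin d → ℝ) → ℝ,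
      RhatSD f = πS / (2 * nS) * ∑ i, (L (f (xS i)) 1 + L (f (xS' i)) 1)
        + πD / (2 * nD) * ∑ i, (L (f (xD i)) (-1) + L (f (xD' i)) (-1)))
    (γ₁ γ₂ γ₃ lam : ℝ) (hγ₁ : 0 ≤ γ₁) (hγ₂ : 0 ≤ γ₂) (hγ₃ : 0 ≤ γ₃) (hlam : 0 ≤ lam)
    (J : EuclideanSpace ℝ (Fin k) → ℝ)
    (hJ : ∀ w, J w = γ₁ * RhatSU (fw w) + γ₂ * RhatDU (fw w) + γ₃ * RhatSD (fw w)
        + lam / 2 * ‖w‖ ^ 2)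
    (hconv : ∀ t ∈ ({1, -1} : Set ℝ), ConvexOn ℝ Set.univ (fun z => ℓ z t))
    (hodd : ∀ z : ℝ, ℓ z 1 - ℓ z (-1) = -z) :
    ConvexOn ℝ Set.univ J :=
  sdu_objective_convex_general πp πm hπp hπm hne πS πD hπS hπD ℓ L hL Lt hLt nS nD nU xS xS' xD xD'
    xU φ fw hfw RhatSU RhatDU RhatSD hRhatSU hRhatDU hRhatSD γ₁ γ₂ γ₃ lam hγ₁ hγ₂ hγ₃ hlam J hJ
    hconv hodd
end
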